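/- The vector field F₁₂(x,y,z) = (0, xy, −y²) on ℝ³ is complete, with explicit flow: the solution with initial condition (x₀,y₀,z₀) is t ↦ (0, y₀, −y₀²t + z₀) if x₀ = 0, and t ↦ (x₀, y₀e^{x₀t}, (y₀²/(2x₀))(1 − e^{2x₀t}) + z₀) if x₀ ≠ 0; moreover every non-stationary integral curve is unbounded. -/

import Mathlib

/-!
The field `F₁₂ = (0, xy, −y²)` is triangular: `x` is constant, then `y` solves the linear
equation `y' = x₀ y`, and finally `z' = −y²` is determined by `y`. Solving the three scalar
equations in turn shows that integral curves are unique. If `y₀ = 0` the initial point is a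
zero of the field, so by uniqueness a non-stationary curve has `y₀ ≠ 0`; then
`y = y₀ e^{x₀ t}` is unbounded if `x₀ ≠ 0`, while `z = −y₀² t + z₀` is unbounded if `x₀ = 0`.
-/

/-- The geodesic field `F₁₂` of `Q₁₂` on `aff(ℝ) ⊕ ℝ`: `(0, xy, −y²)`. -/
def F12 (v : Fin 3 → ℝ) : Fin 3 → ℝ := ![0, v 0 * v 1, -(v 1) ^ 2]

open Real

theorem eq_of_hasDerivAt_eq {𝕜 E : Type*} [NontriviallyNormedField 𝕜] [IsRCLikeNormedField 𝕜]
    [NormedAddCommGroup E] [NormedSpace 𝕜 E] {f g f' : 𝕜 → E}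
    (hf : ∀ t, HasDerivAt f (f' t) t) (hg : ∀ t, HasDerivAt g (f' t) t)
    (t₀ : 𝕜) (h : f t₀ = g t₀) : f = g :=
  eq_of_fderiv_eq (fun t => (hf t).differentiableAt) (fun t => (hg t).differentiableAt)
    (fun t => by rw [(hf t).hasFDerivAt.fderiv, (hg t).hasFDerivAt.fderiv]) t₀ h

theorem eq_mul_exp_of_hasDerivAt_mul {f : ℝ → ℝ} {c : ℝ} (hf : ∀ t, HasDerivAt f (c * f t) t)
    (t : ℝ) : f t = f 0 * exp (c * t) := by
  have hderiv (s : ℝ) : HasDerivAt (fun s => f s * exp (-(c * s))) 0 s := by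
    exact ((hf s).mul (hasDerivAt_const_mul c).neg.exp).congr_deriv (by ring)
  have hconst := congrFun (eq_of_hasDerivAt_eq hderiv (fun s => hasDerivAt_const s (f 0)) 0
    (by simp)) t
  rw [← hconst, mul_assoc, ← exp_add, neg_add_cancel, exp_zero, mul_one]

theorem exists_lt_abs_mul_add {a : ℝ} (ha : a ≠ 0) (b C : ℝ) : ∃ t, C < |a * t + b| := by
  refine ⟨(|C| + 1 - b) / a, ?_⟩
  rw [mul_div_cancel₀ _ ha, sub_add_cancel, abs_of_pos (by positivity : (0 : ℝ) < |C| + 1)]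
  linarith [le_abs_self C]

theorem exists_lt_abs_mul_exp {a c : ℝ} (ha : a ≠ 0) (hc : c ≠ 0) (C : ℝ) :
    ∃ t, C < |a * exp (c * t)| := by
  refine ⟨log ((|C| + 1) / |a|) / c, ?_⟩
  rw [mul_div_cancel₀ _ hc, exp_log (by positivity), abs_mul, abs_div, abs_abs,
    mul_div_cancel₀ _ (abs_ne_zero.2 ha), abs_of_pos (by positivity : (0 : ℝ) < |C| + 1)]
  linarith [le_abs_self C]

theorem not_exists_norm_le_of_forall_exists_lt_abs {α ι : Type*} [Fintype ι] {γ : α → ι → ℝ}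
    (i : ι) (h : ∀ C, ∃ t, C < |γ t i|) : ¬ ∃ C, ∀ t, ‖γ t‖ ≤ C := by
  rintro ⟨C, hC⟩
  obtain ⟨t, ht⟩ := h C
  exact ht.not_ge ((norm_le_pi_norm (γ t) i).trans (hC t))

theorem HasDerivAt.vec3 {𝕜 E : Type*} [NontriviallyNormedField 𝕜] [NormedAddCommGroup E]
    [NormedSpace 𝕜 E] {f g h : 𝕜 → E} {f' g' h' : E} {t : 𝕜} (hf : HasDerivAt f f' t)
    (hg : HasDerivAt g g' t) (hh : HasDerivAt h h' t) :
    HasDerivAt (fun s => ![f s, g s, h s]) ![f', g', h'] t :=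
  hasDerivAt_pi.2 fun i => by fin_cases i <;> assumption

theorem F12_integralCurve_coord {γ : ℝ → Fin 3 → ℝ} (hγ : ∀ t, HasDerivAt γ (F12 (γ t)) t)
    (t : ℝ) :
    HasDerivAt (γ · 0) 0 t ∧ HasDerivAt (γ · 1) (γ t 0 * γ t 1) t ∧
      HasDerivAt (γ · 2) (-γ t 1 ^ 2) t :=
  ⟨hasDerivAt_pi.1 (hγ t) 0, hasDerivAt_pi.1 (hγ t) 1, hasDerivAt_pi.1 (hγ t) 2⟩

theorem F12_integralCurve_apply_zero {γ : ℝ → Fin 3 → ℝ}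
    (hγ : ∀ t, HasDerivAt γ (F12 (γ t)) t) (t : ℝ) : γ t 0 = γ 0 0 :=
  congrFun (eq_of_hasDerivAt_eq (fun s => (F12_integralCurve_coord hγ s).1)
    (fun s => hasDerivAt_const s (γ 0 0)) 0 rfl) t

theorem F12_integralCurve_apply_one {γ : ℝ → Fin 3 → ℝ}
    (hγ : ∀ t, HasDerivAt γ (F12 (γ t)) t) (t : ℝ) : γ t 1 = γ 0 1 * exp (γ 0 0 * t) :=
  eq_mul_exp_of_hasDerivAt_mul (f := (γ · 1)) (fun s => by
    simpa only [F12_integralCurve_apply_zero hγ s] using (F12_integralCurve_coord hγ s).2.1) t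

theorem F12_integralCurve_unique {γ δ : ℝ → Fin 3 → ℝ} (hγ : ∀ t, HasDerivAt γ (F12 (γ t)) t)
    (hδ : ∀ t, HasDerivAt δ (F12 (δ t)) t) (h0 : γ 0 = δ 0) : γ = δ := by
  have hx (t : ℝ) : γ t 0 = δ t 0 := by
    rw [F12_integralCurve_apply_zero hγ, F12_integralCurve_apply_zero hδ, h0]
  have hy (t : ℝ) : γ t 1 = δ t 1 := by
    rw [F12_integralCurve_apply_one hγ, F12_integralCurve_apply_one hδ, h0]
  have hz : (γ · 2) = (δ · 2) :=
    eq_of_hasDerivAt_eq (fun t => (F12_integralCurve_coord hγ t).2.2)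
      (fun t => hy t ▸ (F12_integralCurve_coord hδ t).2.2) 0 (congrFun h0 2)
  funext t i
  fin_cases i
  exacts [hx t, hy t, congrFun hz t]

theorem hasDerivAt_F12_flow_of_eq_zero (y₀ z₀ t : ℝ) :
    HasDerivAt (fun t : ℝ => (![0, y₀, -y₀ ^ 2 * t + z₀] : Fin 3 → ℝ))
      (F12 ![0, y₀, -y₀ ^ 2 * t + z₀]) t := by
  convert (hasDerivAt_const t 0).vec3 (hasDerivAt_const t y₀)
    ((hasDerivAt_const_mul (-y₀ ^ 2)).add_const z₀) using 1
  simp [F12]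

theorem hasDerivAt_F12_flow_of_ne_zero {x₀ : ℝ} (hx₀ : x₀ ≠ 0) (y₀ z₀ t : ℝ) :
    HasDerivAt (fun t : ℝ => (![x₀, y₀ * exp (x₀ * t),
        y₀ ^ 2 / (2 * x₀) * (1 - exp (2 * x₀ * t)) + z₀] : Fin 3 → ℝ))
      (F12 ![x₀, y₀ * exp (x₀ * t), y₀ ^ 2 / (2 * x₀) * (1 - exp (2 * x₀ * t)) + z₀]) t := by
  convert (hasDerivAt_const t x₀).vec3 ((hasDerivAt_const_mul x₀).exp.const_mul y₀)
    ((((hasDerivAt_const_mul (2 * x₀)).exp.const_sub 1).const_mul (y₀ ^ 2 / (2 * x₀))).add_const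
      z₀) using 1
  have hsq : exp (2 * x₀ * t) = exp (x₀ * t) ^ 2 := by rw [← exp_nat_mul]; ring_nf
  simp only [F12, Matrix.cons_val_zero, Matrix.cons_val_one, hsq]
  congr 2 <;> field_simp

theorem F12_integralCurve_unbounded {γ : ℝ → Fin 3 → ℝ} (hγ : ∀ t, HasDerivAt γ (F12 (γ t)) t)
    (hmoving : ¬ ∀ t, γ t = γ 0) : ¬ ∃ C, ∀ t, ‖γ t‖ ≤ C := by
  have hy : γ 0 1 ≠ 0 := by
    intro hy
    have hzero : F12 (γ 0) = 0 := by simp [F12, hy]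
    have hconst (t : ℝ) : HasDerivAt (fun _ => γ 0) (F12 (γ 0)) t :=
      hzero ▸ hasDerivAt_const t (γ 0)
    exact hmoving fun t => congrFun (F12_integralCurve_unique hγ hconst rfl) t
  rcases eq_or_ne (γ 0 0) 0 with hx | hx
  · have hflow : γ = fun t => ![0, γ 0 1, -γ 0 1 ^ 2 * t + γ 0 2] :=
      F12_integralCurve_unique hγ (hasDerivAt_F12_flow_of_eq_zero _ _)
        (by ext i; fin_cases i <;> simp [hx])
    refine not_exists_norm_le_of_forall_exists_lt_abs 2 fun C => ?_
    rw [hflow]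
    simpa using exists_lt_abs_mul_add (neg_ne_zero.2 (pow_ne_zero 2 hy)) (γ 0 2) C
  · refine not_exists_norm_le_of_forall_exists_lt_abs 1 fun C => ?_
    obtain ⟨t, ht⟩ := exists_lt_abs_mul_exp hy hx C
    exact ⟨t, by rwa [F12_integralCurve_apply_one hγ t]⟩

/-- `F₁₂` is complete, with explicit flow as given, and every
non-stationary integral curve is unbounded. -/
theorem stmt_10 :
    (∀ y₀ z₀ : ℝ,
      (fun t : ℝ => (![0, y₀, -y₀ ^ 2 * t + z₀] : Fin 3 → ℝ)) 0 = ![0, y₀, z₀] ∧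
      ∀ t : ℝ, HasDerivAt (fun t : ℝ => (![0, y₀, -y₀ ^ 2 * t + z₀] : Fin 3 → ℝ))
        (F12 ![0, y₀, -y₀ ^ 2 * t + z₀]) t) ∧
    (∀ x₀ y₀ z₀ : ℝ, x₀ ≠ 0 →
      (fun t : ℝ => (![x₀, y₀ * Real.exp (x₀ * t),
          y₀ ^ 2 / (2 * x₀) * (1 - Real.exp (2 * x₀ * t)) + z₀] : Fin 3 → ℝ)) 0
        = ![x₀, y₀, z₀] ∧
      ∀ t : ℝ, HasDerivAt (fun t : ℝ => (![x₀, y₀ * Real.exp (x₀ * t),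
          y₀ ^ 2 / (2 * x₀) * (1 - Real.exp (2 * x₀ * t)) + z₀] : Fin 3 → ℝ))
        (F12 ![x₀, y₀ * Real.exp (x₀ * t),
          y₀ ^ 2 / (2 * x₀) * (1 - Real.exp (2 * x₀ * t)) + z₀]) t) ∧
    (∀ γ : ℝ → Fin 3 → ℝ, (∀ t, HasDerivAt γ (F12 (γ t)) t) →
      (¬ ∀ t, γ t = γ 0) → ¬ ∃ C, ∀ t, ‖γ t‖ ≤ C) :=
  ⟨fun y₀ z₀ => ⟨by simp, hasDerivAt_F12_flow_of_eq_zero y₀ z₀⟩,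
    fun x₀ y₀ z₀ hx₀ => ⟨by simp, hasDerivAt_F12_flow_of_ne_zero hx₀ y₀ z₀⟩,
    fun _ hγ hmoving => F12_integralCurve_unbounded hγ hmoving⟩
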